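/- Suppose Σ_{S ∈ I} f_S(x_S) = Σ_{T ∈ J} g_T(x_T) for all x ∈ ℝᵈ, where I, J ⊆ 𝒫({1,…,d}) are downward-closed collections of subsets, all f_S, g_T are smooth, and each maximal S ∈ I satisfies ∂^{|S|} f_S / ∂x_S ≢ 0 (and similarly for maximal T ∈ J). Then the maximal elements of I equal the maximal elements of J. -/

import Mathlib

/-- Mixed partial derivative of `f` taken once in each coordinate of the list `l`. -/
noncomputable def mixedPartial {d : ℕ} (l : List (Fin d)) (f : (Fin d → ℝ) → ℝ) :
    (Fin d → ℝ) → ℝ :=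
  l.foldr (fun i g x => fderiv ℝ g x (Pi.single i 1)) f

/-- `f` depends only on the coordinates in `S`. -/
def DependsOnlyOn {d : ℕ} (f : (Fin d → ℝ) → ℝ) (S : Finset (Fin d)) : Prop :=
  ∀ x y : Fin d → ℝ, (∀ i ∈ S, x i = y i) → f x = f y

noncomputable def projT {d : ℕ} (T : Finset (Fin d)) : (Fin d → ℝ) →L[ℝ] (Fin d → ℝ) :=
  ContinuousLinearMap.pi (fun j => if j ∈ T then ContinuousLinearMap.proj j else 0)

lemma projT_apply {d : ℕ} (T : Finset (Fin d)) (x : Fin d → ℝ) (j : Fin d) :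
    projT T x j = if j ∈ T then x j else 0 := by
  simp only [projT, ContinuousLinearMap.pi_apply]
  split <;> simp

lemma comp_projT {d : ℕ} {T : Finset (Fin d)} {f : (Fin d → ℝ) → ℝ}
    (hdep : DependsOnlyOn f T) (x : Fin d → ℝ) : f (projT T x) = f x := by
  apply hdep
  intro i hi
  simp [projT_apply, hi]

lemma fderiv_eq_proj {d : ℕ} {T : Finset (Fin d)} {f : (Fin d → ℝ) → ℝ}
    (hf : ContDiff ℝ (⊤ : ℕ∞) f) (hdep : DependsOnlyOn f T) (x v : Fin d → ℝ) :
    fderiv ℝ f x v = fderiv ℝ f (projT T x) (projT T v) := by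
  have hfe : f = f ∘ (projT T) := by
    funext y; exact (comp_projT hdep y).symm
  conv_lhs => rw [hfe]
  rw [fderiv_comp x (hf.differentiable (by simp) _) ((projT T).differentiableAt)]
  rw [(projT T).fderiv]
  rfl

lemma fderiv_apply_smooth {d : ℕ} {f : (Fin d → ℝ) → ℝ} (hf : ContDiff ℝ (⊤ : ℕ∞) f)
    (v : Fin d → ℝ) : ContDiff ℝ (⊤ : ℕ∞) (fun x => fderiv ℝ f x v) :=
  (hf.fderiv_right (by simp)).clm_apply contDiff_const

lemma fderiv_apply_dep {d : ℕ} {T : Finset (Fin d)} {f : (Fin d → ℝ) → ℝ}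
    (hf : ContDiff ℝ (⊤ : ℕ∞) f) (hdep : DependsOnlyOn f T) (v : Fin d → ℝ) :
    DependsOnlyOn (fun x => fderiv ℝ f x v) T := by
  intro x y hxy
  have : projT T x = projT T y := by
    funext j; rw [projT_apply, projT_apply]
    split
    · exact hxy j ‹_›
    · rfl
  calc fderiv ℝ f x v = fderiv ℝ f (projT T x) (projT T v) := fderiv_eq_proj hf hdep x v
    _ = fderiv ℝ f (projT T y) (projT T v) := by rw [this]
    _ = fderiv ℝ f y v := (fderiv_eq_proj hf hdep y v).symm

lemma fderiv_single_zero {d : ℕ} {T : Finset (Fin d)} {f : (Fin d → ℝ) → ℝ}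
    (hf : ContDiff ℝ (⊤ : ℕ∞) f) (hdep : DependsOnlyOn f T) {a : Fin d} (ha : a ∉ T)
    (x : Fin d → ℝ) : fderiv ℝ f x (Pi.single a 1) = 0 := by
  rw [fderiv_eq_proj hf hdep]
  have : projT T (Pi.single a 1) = 0 := by
    funext j
    simp only [projT_apply, Pi.zero_apply]
    split
    · rw [Pi.single_apply, if_neg]
      rintro rfl; exact ha ‹_›
    · rfl
  rw [this, map_zero]

lemma mixedPartial_nil {d : ℕ} (f : (Fin d → ℝ) → ℝ) : mixedPartial [] f = f := rfl

lemma mixedPartial_cons {d : ℕ} (a : Fin d) (l : List (Fin d)) (f : (Fin d → ℝ) → ℝ) :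
    mixedPartial (a :: l) f = fun x => fderiv ℝ (mixedPartial l f) x (Pi.single a 1) := rfl

lemma mixedPartial_smooth {d : ℕ} (l : List (Fin d)) {f : (Fin d → ℝ) → ℝ}
    (hf : ContDiff ℝ (⊤ : ℕ∞) f) : ContDiff ℝ (⊤ : ℕ∞) (mixedPartial l f) := by
  induction l with
  | nil => exact hf
  | cons a l ih => exact fderiv_apply_smooth ih _

lemma mixedPartial_dep {d : ℕ} (l : List (Fin d)) {T : Finset (Fin d)}
    {f : (Fin d → ℝ) → ℝ} (hf : ContDiff ℝ (⊤ : ℕ∞) f) (hdep : DependsOnlyOn f T) :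
    DependsOnlyOn (mixedPartial l f) T := by
  induction l with
  | nil => exact hdep
  | cons a l ih => exact fderiv_apply_dep (mixedPartial_smooth l hf) ih _

lemma mixedPartial_zero {d : ℕ} (l : List (Fin d)) {T : Finset (Fin d)}
    {f : (Fin d → ℝ) → ℝ} (hf : ContDiff ℝ (⊤ : ℕ∞) f) (hdep : DependsOnlyOn f T)
    {a : Fin d} (hal : a ∈ l) (ha : a ∉ T) :
    ∀ x : Fin d → ℝ, mixedPartial l f x = 0 := by
  induction l with
  | nil => simp at hal
  | cons b l ih =>
    intro x
    rw [mixedPartial_cons]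
    rcases List.mem_cons.1 hal with rfl | hal'
    · exact fderiv_single_zero (mixedPartial_smooth l hf) (mixedPartial_dep l hf hdep) ha x
    · have hz : mixedPartial l f = fun _ => (0:ℝ) := funext (ih hal')
      rw [hz, fderiv_fun_const]
      simp

lemma mixedPartial_sum {d : ℕ} (l : List (Fin d)) {ι : Type*} (s : Finset ι)
    (F : ι → (Fin d → ℝ) → ℝ) (hF : ∀ i ∈ s, ContDiff ℝ (⊤ : ℕ∞) (F i)) (x : Fin d → ℝ) :
    mixedPartial l (fun y => ∑ i ∈ s, F i y) x = ∑ i ∈ s, mixedPartial l (F i) x := by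
  induction l generalizing x with
  | nil => rfl
  | cons a l ih =>
    rw [mixedPartial_cons]
    have : mixedPartial l (fun y => ∑ i ∈ s, F i y) = fun y => ∑ i ∈ s, mixedPartial l (F i) y := by
      funext y; exact ih y
    rw [this]
    show (fderiv ℝ (fun y => ∑ i ∈ s, mixedPartial l (F i) y) x) (Pi.single a 1) = _
    rw [fderiv_fun_sum (fun i hi => ((mixedPartial_smooth l (hF i hi)).differentiable (by simp)).differentiableAt)]
    simp [mixedPartial_cons]

lemma mem_aux {d : ℕ} (I J : Finset (Finset (Fin d)))
    (hJ : ∀ T ∈ J, ∀ S ⊆ T, S ∈ J)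
    (f g : Finset (Fin d) → (Fin d → ℝ) → ℝ)
    (hfsmooth : ∀ S ∈ I, ContDiff ℝ (⊤ : ℕ∞) (f S)) (hgsmooth : ∀ T ∈ J, ContDiff ℝ (⊤ : ℕ∞) (g T))
    (hfdep : ∀ S ∈ I, DependsOnlyOn (f S) S) (hgdep : ∀ T ∈ J, DependsOnlyOn (g T) T)
    (heq : ∀ x : Fin d → ℝ, ∑ S ∈ I, f S x = ∑ T ∈ J, g T x)
    (S : Finset (Fin d)) (hS : S ∈ I) (hmax : ∀ T ∈ I, S ⊆ T → S = T)
    (hfm : ∃ x, mixedPartial S.toList (f S) x ≠ 0) : S ∈ J := by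
  by_contra hSJ
  obtain ⟨x, hx⟩ := hfm
  apply hx
  have heqf : (fun y => ∑ T ∈ I, f T y) = (fun y => ∑ T ∈ J, g T y) := funext heq
  have h1 := mixedPartial_sum S.toList I f hfsmooth x
  have h2 := mixedPartial_sum S.toList J g hgsmooth x
  rw [heqf, h2] at h1
  have hR : ∑ T ∈ J, mixedPartial S.toList (g T) x = 0 := by
    apply Finset.sum_eq_zero
    intro T hT
    have hns : ¬ S ⊆ T := fun hsub => hSJ (hJ T hT S hsub)
    obtain ⟨a, haS, haT⟩ := Finset.not_subset.1 hns
    exact mixedPartial_zero S.toList (hgsmooth T hT) (hgdep T hT)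
      (Finset.mem_toList.2 haS) haT x
  rw [hR] at h1
  have hL : ∑ T ∈ I, mixedPartial S.toList (f T) x = mixedPartial S.toList (f S) x := by
    apply Finset.sum_eq_single_of_mem S hS
    intro T hT hne
    have hns : ¬ S ⊆ T := fun hsub => hne ((hmax T hT hsub).symm)
    obtain ⟨a, haS, haT⟩ := Finset.not_subset.1 hns
    exact mixedPartial_zero S.toList (hfsmooth T hT) (hfdep T hT)
      (Finset.mem_toList.2 haS) haT x
  rw [hL] at h1
  exact h1.symm

lemma exists_max_ext {d : ℕ} (J : Finset (Finset (Fin d))) {T : Finset (Fin d)}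
    (hT : T ∈ J) : ∃ T' ∈ J, T ⊆ T' ∧ ∀ U ∈ J, T' ⊆ U → T' = U := by
  obtain ⟨T', hT'M, hmaxcard⟩ := Finset.exists_max_image (J.filter (T ⊆ ·))
    (fun U => U.card) ⟨T, Finset.mem_filter.2 ⟨hT, Finset.Subset.refl T⟩⟩
  obtain ⟨hT'J, hTT'⟩ := Finset.mem_filter.1 hT'M
  refine ⟨T', hT'J, hTT', fun U hU hsub => Finset.eq_of_subset_of_card_le hsub
    (hmaxcard U (Finset.mem_filter.2 ⟨hU, hTT'.trans hsub⟩))⟩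

theorem stmt_3 {d : ℕ} (I J : Finset (Finset (Fin d)))
    (hI : ∀ S ∈ I, ∀ T ⊆ S, T ∈ I) (hJ : ∀ T ∈ J, ∀ S ⊆ T, S ∈ J)
    (f g : Finset (Fin d) → (Fin d → ℝ) → ℝ)
    (hfsmooth : ∀ S ∈ I, ContDiff ℝ (⊤ : ℕ∞) (f S)) (hgsmooth : ∀ T ∈ J, ContDiff ℝ (⊤ : ℕ∞) (g T))
    (hfdep : ∀ S ∈ I, DependsOnlyOn (f S) S) (hgdep : ∀ T ∈ J, DependsOnlyOn (g T) T)
    (heq : ∀ x : Fin d → ℝ, ∑ S ∈ I, f S x = ∑ T ∈ J, g T x)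
    (hfmax : ∀ S ∈ I, (∀ T ∈ I, S ⊆ T → S = T) → ∃ x, mixedPartial S.toList (f S) x ≠ 0)
    (hgmax : ∀ T ∈ J, (∀ S ∈ J, T ⊆ S → T = S) → ∃ x, mixedPartial T.toList (g T) x ≠ 0) :
    ∀ S : Finset (Fin d),
      (S ∈ I ∧ ∀ T ∈ I, S ⊆ T → S = T) ↔ (S ∈ J ∧ ∀ T ∈ J, S ⊆ T → S = T) := by
  have heq' : ∀ x : Fin d → ℝ, ∑ T ∈ J, g T x = ∑ S ∈ I, f S x := fun x => (heq x).symm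
  intro S
  constructor
  · rintro ⟨hS, hmax⟩
    have hSJ : S ∈ J := mem_aux I J hJ f g hfsmooth hgsmooth hfdep hgdep heq S hS hmax
      (hfmax S hS hmax)
    refine ⟨hSJ, fun T hT hST => ?_⟩
    obtain ⟨T', hT'J, hTT', hT'max⟩ := exists_max_ext J hT
    have hT'I : T' ∈ I := mem_aux J I hI g f hgsmooth hfsmooth hgdep hfdep heq' T' hT'J hT'max
      (hgmax T' hT'J hT'max)
    have hST' : S = T' := hmax T' hT'I (hST.trans hTT')
    exact Finset.Subset.antisymm hST (hST' ▸ hTT')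
  · rintro ⟨hS, hmax⟩
    have hSI : S ∈ I := mem_aux J I hI g f hgsmooth hfsmooth hgdep hfdep heq' S hS hmax
      (hgmax S hS hmax)
    refine ⟨hSI, fun T hT hST => ?_⟩
    obtain ⟨T', hT'I, hTT', hT'max⟩ := exists_max_ext I hT
    have hT'J : T' ∈ J := mem_aux I J hJ f g hfsmooth hgsmooth hfdep hgdep heq T' hT'I hT'max
      (hfmax T' hT'I hT'max)
    have hST' : S = T' := hmax T' hT'J (hST.trans hTT')
    exact Finset.Subset.antisymm hST (hST' ▸ hTT')
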